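/- In the calculus with MP, IPC1, IPC2, and the Peirce scheme IPC0, the class [(A ⊃ B) ⊃ B] is the least upper bound of [A] and [B] in the Lindenbaum poset: ⊢ A ⊃ ((A ⊃ B) ⊃ B), ⊢ B ⊃ ((A ⊃ B) ⊃ B), and for every Q, if ⊢ A ⊃ Q and ⊢ B ⊃ Q then ⊢ ((A ⊃ B) ⊃ B) ⊃ Q. -/

import Mathlib

/-! Under `(A ⊃ B) ⊃ B` and `Q ⊃ B`, the hypothesis `A ⊃ Q` yields `A ⊃ B`, hence `B`, and then
`B ⊃ Q` yields `Q`. Discharging `Q ⊃ B` gives `(Q ⊃ B) ⊃ Q`, and Peirce's law turns this into `Q`.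
Reasoning under hypotheses is justified by the deduction theorem. -/

inductive Fm : Type
  | var : Nat → Fm
  | imp : Fm → Fm → Fm

inductive ThmP : Fm → Prop
  | ipc1 (A B : Fm) : ThmP (A.imp (B.imp A))
  | ipc2 (A B C : Fm) : ThmP ((A.imp (B.imp C)).imp ((A.imp B).imp (A.imp C)))
  | ipc0 (A B : Fm) : ThmP (((A.imp B).imp A).imp A)
  | mp {A B : Fm} : ThmP (A.imp B) → ThmP A → ThmP B

theorem ThmP.imp_self (A : Fm) : ThmP (A.imp A) :=
  mp (mp (ipc2 A (A.imp A) A) (ipc1 A (A.imp A))) (ipc1 A A)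

inductive Derives : List Fm → Fm → Prop
  | hyp {Γ : List Fm} {A : Fm} : A ∈ Γ → Derives Γ A
  | thm {Γ : List Fm} {A : Fm} : ThmP A → Derives Γ A
  | mp {Γ : List Fm} {A B : Fm} : Derives Γ (A.imp B) → Derives Γ A → Derives Γ B

namespace Derives

theorem imp_intro {Γ : List Fm} {A B : Fm} (h : Derives (A :: Γ) B) : Derives Γ (A.imp B) := by
  induction h with
  | hyp hmem =>
    rcases List.mem_cons.mp hmem with rfl | hmem
    · exact thm (ThmP.imp_self _)
    · exact mp (thm (ThmP.ipc1 _ _)) (hyp hmem)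
  | thm h => exact mp (thm (ThmP.ipc1 _ _)) (thm h)
  | mp _ _ ihAB ihA => exact mp (mp (thm (ThmP.ipc2 _ _ _)) ihAB) ihA

theorem thmP_of_nil {A : Fm} (h : Derives [] A) : ThmP A := by
  generalize hΓ : ([] : List Fm) = Γ at h
  induction h with
  | hyp hmem => subst hΓ; simp at hmem
  | thm h => exact h
  | mp _ _ ihAB ihA => exact ThmP.mp ihAB ihA

end Derives

namespace ThmP

open Derives in
theorem imp_imp_imp_self (A B : Fm) : ThmP (A.imp ((A.imp B).imp B)) :=
  thmP_of_nil <| imp_intro <| imp_intro <| .mp (A := A) (hyp (by simp)) (hyp (by simp))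

open Derives in
theorem imp_imp_imp_of_imp_of_imp {A B Q : Fm} (hA : ThmP (A.imp Q)) (hB : ThmP (B.imp Q)) :
    ThmP (((A.imp B).imp B).imp Q) := by
  refine thmP_of_nil <| imp_intro <| .mp (thm (ipc0 Q B)) <| imp_intro ?_
  have hAB : Derives [Q.imp B, (A.imp B).imp B] (A.imp B) :=
    imp_intro <| .mp (hyp (by simp)) (.mp (thm hA) (hyp (by simp)))
  exact .mp (thm hB) (.mp (hyp (by simp)) hAB)

end ThmP

theorem stmt_17 (A B : Fm) :
    ThmP (A.imp ((A.imp B).imp B)) ∧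
    ThmP (B.imp ((A.imp B).imp B)) ∧
    (∀ Q : Fm, ThmP (A.imp Q) → ThmP (B.imp Q) → ThmP (((A.imp B).imp B).imp Q)) :=
  ⟨ThmP.imp_imp_imp_self A B, ThmP.ipc1 B (A.imp B),
    fun _ => ThmP.imp_imp_imp_of_imp_of_imp⟩
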